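/- Let n ≥ 3, N ≥ 1, L ≥ 0 and m_1, …, m_N ≥ 2. In the group Z_n(Σ_Γ(L)), the elements h_1 and u_1 satisfy the relation ⟨h_1, u_1 h_1 u_1^{-1}⟩_{m_1} = ⟨u_1 h_1 u_1^{-1}, h_1⟩_{m_1}. -/

import Mathlib

/-! Put `z = h u h u`. The type-B relation `h u h u = u h u h` makes `z` commute with `h` and
`u`, so with `y = u h u⁻¹` one gets `h y = z u⁻²` and `y h = h⁻¹ (h y) h`. Writing `m = 2k` or
`m = 2k + 1`, the relation `u ^ m = 1` turns `(h y)^k` into `z^k` resp. `z^k u`; in the first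
case both alternating words equal `z^k`, in the second both equal `z^k u h`. -/

namespace StmtS

/-- Generators of `Z_n(Σ_Γ(L))`: `Sum.inl i` is `h_{i+1}`, `Sum.inr (Sum.inl l)` is the
puncture generator `t_{l+1}`, and `Sum.inr (Sum.inr v)` is the cone-point generator
`u_{v+1}`. -/
abbrev Gen (n L N : ℕ) := Fin (n - 1) ⊕ (Fin L ⊕ Fin N)

def sh {n L N : ℕ} (i : Fin (n - 1)) : FreeGroup (Gen n L N) := FreeGroup.of (Sum.inl i)

def st {n L N : ℕ} (l : Fin L) : FreeGroup (Gen n L N) := FreeGroup.of (Sum.inr (Sum.inl l))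

def su {n L N : ℕ} (v : Fin N) : FreeGroup (Gen n L N) := FreeGroup.of (Sum.inr (Sum.inr v))

/-- Defining relations of `Z_n(Σ_Γ(L))` for `Γ = Z_{m_1} * ⋯ * Z_{m_N}`. -/
def srels (n L N : ℕ) (m : Fin N → ℕ) : Set (FreeGroup (Gen n L N)) :=
  {r | (∃ v : Fin N, r = su v ^ m v)
    ∨ (∃ i j : Fin (n - 1), (i : ℕ) + 1 = (j : ℕ) ∧
        r = sh i * sh j * sh i * (sh j * sh i * sh j)⁻¹)
    ∨ (∃ i j : Fin (n - 1), (i : ℕ) + 2 ≤ (j : ℕ) ∧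
        r = sh i * sh j * (sh j * sh i)⁻¹)
    ∨ (∃ (l : Fin L) (i : Fin (n - 1)), 1 ≤ (i : ℕ) ∧
        r = st l * sh i * (sh i * st l)⁻¹)
    ∨ (∃ (v : Fin N) (i : Fin (n - 1)), 1 ≤ (i : ℕ) ∧
        r = su v * sh i * (sh i * su v)⁻¹)
    ∨ (∃ (l : Fin L) (i : Fin (n - 1)), (i : ℕ) = 0 ∧
        r = (sh i * st l * sh i) * st l * (st l * (sh i * st l * sh i))⁻¹)
    ∨ (∃ (v : Fin N) (i : Fin (n - 1)), (i : ℕ) = 0 ∧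
        r = (sh i * su v * sh i) * su v * (su v * (sh i * su v * sh i))⁻¹)
    ∨ (∃ (l₁ l₂ : Fin L) (i : Fin (n - 1)), (l₁ : ℕ) < (l₂ : ℕ) ∧ (i : ℕ) = 0 ∧
        r = st l₁ * ((sh i)⁻¹ * st l₂ * sh i) * (((sh i)⁻¹ * st l₂ * sh i) * st l₁)⁻¹)
    ∨ (∃ (v₁ v₂ : Fin N) (i : Fin (n - 1)), (v₁ : ℕ) < (v₂ : ℕ) ∧ (i : ℕ) = 0 ∧
        r = su v₁ * ((sh i)⁻¹ * su v₂ * sh i) * (((sh i)⁻¹ * su v₂ * sh i) * su v₁)⁻¹)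
    ∨ (∃ (l : Fin L) (v : Fin N) (i : Fin (n - 1)), (i : ℕ) = 0 ∧
        r = st l * ((sh i)⁻¹ * su v * sh i) * (((sh i)⁻¹ * su v * sh i) * st l)⁻¹)}

/-- The orbifold braid group `Z_n(Σ_Γ(L))`. -/
abbrev S (n L N : ℕ) (m : Fin N → ℕ) := PresentedGroup (srels n L N m)

/-- The product `h_1 h_2 ⋯ h_{n-1}` in `Z_n(Σ_Γ(L))`. -/
def hprod (n L N : ℕ) (m : Fin N → ℕ) : S n L N m :=
  (List.ofFn (fun i : Fin (n - 1) => (PresentedGroup.of (Sum.inl i) : S n L N m))).prod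

/-- `c_ν = h_{n-1}⁻¹ ⋯ h_1⁻¹ · u_ν · h_1 ⋯ h_{n-1}` in `Z_n(Σ_Γ(L))`. -/
def c (n L N : ℕ) (m : Fin N → ℕ) (v : Fin N) : S n L N m :=
  (hprod n L N m)⁻¹ * PresentedGroup.of (Sum.inr (Sum.inr v)) * hprod n L N m

/-- `alt x y k` is the alternating product `x y x y ⋯` with `k` factors, starting with `x`. -/
def alt {G : Type*} [Monoid G] (x y : G) : ℕ → G
  | 0 => 1
  | k + 1 => x * alt y x k

section Alt

variable {G : Type*}

lemma alt_add_two [Monoid G] (x y : G) (k : ℕ) : alt x y (k + 2) = x * y * alt x y k := by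
  simp only [alt, mul_assoc]

lemma alt_two_mul [Monoid G] (x y : G) (k : ℕ) : alt x y (2 * k) = (x * y) ^ k := by
  induction k with
  | zero => simp only [alt, pow_zero]
  | succ k ih => rw [Nat.mul_succ, alt_add_two, ih, pow_succ']

lemma alt_two_mul_add_one [Monoid G] (x y : G) (k : ℕ) :
    alt x y (2 * k + 1) = (x * y) ^ k * x := by
  rw [alt, alt_two_mul, mul_pow_mul]

lemma mul_pow_eq_conj_swap [Group G] (x y : G) (k : ℕ) :
    (y * x) ^ k = x⁻¹ * (x * y) ^ k * x := by
  rw [mul_assoc, mul_pow_mul, inv_mul_cancel_left]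

end Alt

section TypeB

variable {G : Type*} [Group G] {h u : G}

lemma commute_left_of_braid (hbr : h * u * h * u = u * h * u * h) :
    Commute (h * u * h * u) h := by
  change _ * h = h * _
  conv_rhs => rw [hbr]
  group

lemma commute_right_of_braid (hbr : h * u * h * u = u * h * u * h) :
    Commute (h * u * h * u) u := by
  change _ * u = u * _
  conv_lhs => rw [hbr]
  group

lemma mul_conj_pow_of_braid (hbr : h * u * h * u = u * h * u * h) (k : ℕ) :
    (h * (u * h * u⁻¹)) ^ k = (h * u * h * u) ^ k * (u ^ (2 * k))⁻¹ := by
  rw [show h * (u * h * u⁻¹) = h * u * h * u * (u ^ 2)⁻¹ by group,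
    ((commute_right_of_braid hbr).pow_right 2).inv_right.mul_pow, inv_pow, pow_mul]

theorem alt_comm_conj_of_braid (hbr : h * u * h * u = u * h * u * h) {m : ℕ}
    (hum : u ^ m = 1) : alt h (u * h * u⁻¹) m = alt (u * h * u⁻¹) h m := by
  obtain ⟨k, rfl | rfl⟩ := Nat.even_or_odd' m
  all_goals have hzh := (commute_left_of_braid hbr).pow_left k
  · rw [alt_two_mul, alt_two_mul, mul_pow_eq_conj_swap h, mul_conj_pow_of_braid hbr,
      hum, inv_one, mul_one, mul_assoc h⁻¹, hzh.eq, inv_mul_cancel_left]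
  · have hu : (u ^ (2 * k))⁻¹ = u := inv_eq_of_mul_eq_one_right (by rwa [← pow_succ])
    have huh : h⁻¹ * (u * h * u * h) * u⁻¹ = u * h := by rw [← hbr]; group
    rw [alt_two_mul_add_one, alt_two_mul_add_one, mul_pow_eq_conj_swap h,
      mul_conj_pow_of_braid hbr, hu]
    generalize (h * u * h * u) ^ k = z at hzh ⊢
    calc z * u * h
        = z * (h⁻¹ * (u * h * u * h) * u⁻¹) := by rw [huh, mul_assoc]
      _ = h⁻¹ * (z * u) * h * (u * h * u⁻¹) := by
        simp only [mul_assoc, hzh.inv_right.symm.left_comm]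

end TypeB

section Presentation

variable {n L N : ℕ} {m : Fin N → ℕ}

lemma of_cone_pow_eq_one (v : Fin N) :
    (PresentedGroup.of (Sum.inr (Sum.inr v)) : S n L N m) ^ m v = 1 := by
  rw [PresentedGroup.of, ← map_pow]
  exact PresentedGroup.one_of_mem (Or.inl ⟨v, rfl⟩)

lemma of_cone_braid (v : Fin N) (i : Fin (n - 1)) (hi : (i : ℕ) = 0) :
    (PresentedGroup.of (Sum.inl i) * PresentedGroup.of (Sum.inr (Sum.inr v)) *
        PresentedGroup.of (Sum.inl i) * PresentedGroup.of (Sum.inr (Sum.inr v)) : S n L N m) =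
      PresentedGroup.of (Sum.inr (Sum.inr v)) * PresentedGroup.of (Sum.inl i) *
        PresentedGroup.of (Sum.inr (Sum.inr v)) * PresentedGroup.of (Sum.inl i) := by
  have hrel := PresentedGroup.mk_eq_mk_of_mul_inv_mem (rels := srels n L N m)
    (Or.inr <| Or.inr <| Or.inr <| Or.inr <| Or.inr <| Or.inr <| Or.inl ⟨v, i, hi, rfl⟩)
  simp only [map_mul, mul_assoc] at hrel ⊢
  exact hrel

end Presentation

theorem stmt_8 (n L N : ℕ) (m : Fin N → ℕ) (hn : 3 ≤ n) (hN : 1 ≤ N) :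
    (alt (PresentedGroup.of (Sum.inl ⟨0, by omega⟩))
        (PresentedGroup.of (Sum.inr (Sum.inr ⟨0, by omega⟩)) *
          PresentedGroup.of (Sum.inl ⟨0, by omega⟩) *
          (PresentedGroup.of (Sum.inr (Sum.inr ⟨0, by omega⟩)))⁻¹)
        (m ⟨0, by omega⟩) : S n L N m) =
      alt (PresentedGroup.of (Sum.inr (Sum.inr ⟨0, by omega⟩)) *
          PresentedGroup.of (Sum.inl ⟨0, by omega⟩) *
          (PresentedGroup.of (Sum.inr (Sum.inr ⟨0, by omega⟩)))⁻¹)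
        (PresentedGroup.of (Sum.inl ⟨0, by omega⟩)) (m ⟨0, by omega⟩) :=
  alt_comm_conj_of_braid (of_cone_braid _ _ rfl) (of_cone_pow_eq_one _)

end StmtS
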